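/- arXiv:1709.08338 — 3 statements merged into one kernel-verified Lean document; each statement's English description precedes it below -/
import Mathlib

section
/- Let $\Lambda$ be a graded-commutative ring (e.g. an exterior algebra) and let $\alpha_0, \alpha_1, \ldots, \alpha_p$ be odd (degree-one) elements. Then $(\alpha_0 - \alpha_1)(\alpha_1 - \alpha_2)\cdots(\alpha_{p-1} - \alpha_p) = \sum_{j=0}^{p} (-1)^{p-j}\, \alpha_0 \alpha_1 \cdots \widehat{\alpha_j} \cdots \alpha_p$, where the hat denotes omission of the $j$-th factor. -/
lemma filt_lt {n j : ℕ} (h : n ≤ j) :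
    (List.range n).filter (fun i => i ≠ j) = List.range n := by
  apply List.filter_eq_self.mpr
  intro a ha
  simp only [List.mem_range] at ha
  simp [Nat.ne_of_lt (lt_of_lt_of_le ha h)]

lemma filt_succ {n j : ℕ} (h : j ≠ n) :
    (List.range (n+1)).filter (fun i => i ≠ j)
      = (List.range n).filter (fun i => i ≠ j) ++ [n] := by
  rw [List.range_succ, List.filter_append]
  simp [Ne.symm h]

lemma filt_last (n : ℕ) :
    (List.range (n+1)).filter (fun i => i ≠ n) = List.range n := by
  rw [List.range_succ, List.filter_append, filt_lt (le_refl n)]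
  simp

/-- For odd (degree-one, square-zero, pairwise anticommuting) elements
`α 0, …, α p` of a graded-commutative ring,
`(α0 - α1)(α1 - α2)⋯(α_{p-1} - α_p) = ∑_{j=0}^p (-1)^{p-j} α0 ⋯ α̂j ⋯ αp`. -/
theorem bss_cs_product_identity {R : Type*} [Ring R] (p : ℕ) (α : ℕ → R)
    (hanti : ∀ i j, α i * α j = -(α j * α i))
    (hsq : ∀ i, α i * α i = 0) :
    ((List.range p).map (fun s => α s - α (s + 1))).prod =
      ∑ j ∈ Finset.range (p + 1),
        (-1 : R) ^ (p - j) *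
          ((((List.range (p + 1)).filter (fun i => i ≠ j)).map α).prod) := by
  induction p with
  | zero => rw [Finset.sum_range_one, filt_last 0]; simp
  | succ p ih =>
    rw [List.range_succ, List.map_append, List.prod_append, ih]
    simp only [List.map_cons, List.map_nil, List.prod_cons, List.prod_nil, mul_one]
    rw [Finset.sum_mul, Finset.sum_range_succ (n := p + 1)]
    have hlast : (-1 : R) ^ (p + 1 - (p + 1)) *
        ((((List.range (p + 1 + 1)).filter (fun i => i ≠ p + 1)).map α).prod)
        = ((List.range (p+1)).map α).prod := by
      rw [Nat.sub_self, pow_zero, one_mul, filt_last (p+1)]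
    rw [hlast]
    have step : ∀ j ∈ Finset.range (p + 1),
        (-1 : R) ^ (p - j) *
          ((((List.range (p + 1)).filter (fun i => i ≠ j)).map α).prod) *
          (α p - α (p + 1))
        = (if j = p then ((List.range (p+1)).map α).prod else 0)
          + (-1 : R) ^ (p + 1 - j) *
            ((((List.range (p + 1 + 1)).filter (fun i => i ≠ j)).map α).prod) := by
      intro j hj
      rw [Finset.mem_range, Nat.lt_succ_iff] at hj
      rw [mul_sub]
      have h2 : (List.range (p + 1 + 1)).filter (fun i => i ≠ j)
          = (List.range (p + 1)).filter (fun i => i ≠ j) ++ [p+1] :=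
        filt_succ (by omega)
      have hα : (-1 : R) ^ (p - j) *
          ((((List.range (p + 1)).filter (fun i => i ≠ j)).map α).prod) * α (p + 1)
          = -((-1 : R) ^ (p + 1 - j) *
            ((((List.range (p + 1 + 1)).filter (fun i => i ≠ j)).map α).prod)) := by
        rw [h2, List.map_append, List.prod_append]
        have he : p + 1 - j = (p - j) + 1 := by omega
        rw [he, pow_succ]
        simp only [List.map_cons, List.map_nil, List.prod_cons, List.prod_nil, mul_one]
        noncomm_ring
      rw [hα]
      rcases eq_or_lt_of_le hj with hje | hjl
      · subst hje
        rw [if_pos rfl, filt_last j]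
        have : (List.map α (List.range j)).prod * α j
            = (List.map α (List.range (j+1))).prod := by
          rw [List.range_succ, List.map_append, List.prod_append]
          simp
        rw [Nat.sub_self, pow_zero, one_mul, this]
        noncomm_ring
      · have hf : (List.range (p + 1)).filter (fun i => i ≠ j)
            = (List.range p).filter (fun i => i ≠ j) ++ [p] :=
          filt_succ (by omega)
        have hz : (-1 : R) ^ (p - j) *
            ((((List.range (p + 1)).filter (fun i => i ≠ j)).map α).prod) * α p = 0 := by
          rw [hf, List.map_append, List.prod_append]
          simp only [List.map_cons, List.map_nil, List.prod_cons, List.prod_nil, mul_one]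
          rw [mul_assoc, mul_assoc, hsq, mul_zero, mul_zero]
        rw [hz, if_neg (by omega)]
        noncomm_ring
    rw [Finset.sum_congr rfl step, Finset.sum_add_distrib]
    have hone : ∑ j ∈ Finset.range (p+1),
        (if j = p then ((List.range (p+1)).map α).prod else 0)
        = ((List.range (p+1)).map α).prod := by
      rw [Finset.sum_ite_eq' (Finset.range (p+1)) p
        (fun _ => ((List.range (p+1)).map α).prod)]
      simp
    rw [hone, add_comm]
end

section
/- Let $R$ be a commutative ring and let $v_0, v_1, \ldots, v_p$ be $p+1$ vectors in $R^p$. Then $\sum_{j=0}^{p} (-1)^j \det(v_0, \ldots, \widehat{v_j}, \ldots, v_p) = \det(v_1 - v_0,\; v_2 - v_1,\; \ldots,\; v_p - v_{p-1})$, where $\det(w_1,\ldots,w_p)$ denotes the determinant of the $p \times p$ matrix with columns $w_1, \ldots, w_p$ and the hat denotes omission. -/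
open Matrix Finset

/-- For `p+1` vectors `v 0, …, v p` in `R^p` over a commutative ring `R`,
`∑_{j=0}^p (-1)^j det(v0, …, v̂j, …, vp) = det(v1 - v0, v2 - v1, …, vp - v_{p-1})`,
determinants being taken of the `p × p` matrices with the indicated columns. -/
theorem det_alternating_sum_eq_det_differences {R : Type*} [CommRing R] (p : ℕ)
    (v : Fin (p + 1) → Fin p → R) :
    ∑ j : Fin (p + 1), (-1 : R) ^ (j : ℕ) *
        Matrix.det (Matrix.of fun r c : Fin p => v (j.succAbove c) r) =
      Matrix.det (Matrix.of fun r c : Fin p => v c.succ r - v c.castSucc r) := by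
  set M : Matrix (Fin (p+1)) (Fin (p+1)) R :=
    Matrix.of fun i j => Fin.cases (1:R) (fun r => v j r) i with hM
  set T : Matrix (Fin (p+1)) (Fin (p+1)) R :=
    Matrix.of fun k j => (if k = j then (1:R) else 0) -
      (if (k:ℕ)+1 = (j:ℕ) then 1 else 0) with hT
  -- step 1: LHS = det M
  have h1 : (∑ j : Fin (p + 1), (-1 : R) ^ (j : ℕ) *
        Matrix.det (Matrix.of fun r c : Fin p => v (j.succAbove c) r)) = M.det := by
    rw [Matrix.det_succ_row_zero M]
    refine Finset.sum_congr rfl fun j _ => ?_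
    have h0 : M 0 j = 1 := rfl
    have hsub : (M.submatrix Fin.succ j.succAbove) =
        Matrix.of fun r c : Fin p => v (j.succAbove c) r := by
      ext r c; rfl
    rw [h0, hsub, mul_one]
  -- step 2: T is unitriangular, det T = 1
  have hT_tri : T.BlockTriangular id := by
    intro i j h
    simp only [id] at h
    have hij : (j:ℕ) < (i:ℕ) := h
    simp only [hT, Matrix.of_apply]
    rw [if_neg (by exact fun e => by omega : ¬ i = j), if_neg (by omega)]
    ring
  have hdetT : T.det = 1 := by
    rw [Matrix.det_of_upperTriangular hT_tri]
    refine Finset.prod_eq_one fun i _ => ?_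
    simp [hT]
  -- step 3: compute M * T
  have hMT0 : ∀ i, (M * T) i 0 = M i 0 := by
    intro i
    rw [Matrix.mul_apply]
    have : ∀ k : Fin (p+1), M i k * T k 0 = if k = 0 then M i k else 0 := by
      intro k
      simp only [hT, Matrix.of_apply]
      have h2 : ¬ ((k:ℕ)+1 = ((0 : Fin (p+1)):ℕ)) := by simp
      rw [if_neg h2]
      by_cases hk : k = 0 <;> simp [hk]
    rw [Finset.sum_congr rfl fun k _ => this k, Finset.sum_ite_eq' Finset.univ 0 (fun k => M i k)]
    simp
  have hMTs : ∀ i (c : Fin p), (M * T) i c.succ = M i c.succ - M i c.castSucc := by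
    intro i c
    rw [Matrix.mul_apply]
    have : ∀ k : Fin (p+1), M i k * T k c.succ =
        (if k = c.succ then M i k else 0) - (if k = c.castSucc then M i k else 0) := by
      intro k
      simp only [hT, Matrix.of_apply]
      have hiff : ((k:ℕ)+1 = ((c.succ : Fin (p+1)):ℕ)) ↔ k = c.castSucc := by
        rw [Fin.ext_iff]
        simp only [Fin.val_succ, Fin.coe_castSucc]
        omega
      simp only [hiff]
      split_ifs <;> ring
    rw [Finset.sum_congr rfl fun k _ => this k, Finset.sum_sub_distrib,
      Finset.sum_ite_eq' Finset.univ c.succ (fun k => M i k),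
      Finset.sum_ite_eq' Finset.univ c.castSucc (fun k => M i k)]
    simp
  -- step 4: det (M * T) = RHS via expansion along first row
  have h4 : (M * T).det =
      Matrix.det (Matrix.of fun r c : Fin p => v c.succ r - v c.castSucc r) := by
    rw [Matrix.det_succ_row_zero, Fin.sum_univ_succ]
    have hz : ∀ c : Fin p, (M * T) 0 c.succ = 0 := by
      intro c
      rw [hMTs 0 c]
      show (1:R) - 1 = 0
      ring
    have hzsum : (∑ c : Fin p, (-1:R) ^ ((c.succ : Fin (p+1)):ℕ) * (M * T) 0 c.succ *
        ((M * T).submatrix Fin.succ c.succ.succAbove).det) = 0 := by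
      refine Finset.sum_eq_zero fun c _ => ?_
      rw [hz c]; ring
    rw [hzsum, add_zero, hMT0 0]
    have h00 : M 0 0 = 1 := rfl
    rw [h00]
    have hsub : ((M * T).submatrix Fin.succ (Fin.succAbove 0)) =
        Matrix.of fun r c : Fin p => v c.succ r - v c.castSucc r := by
      ext r c
      simp only [Matrix.submatrix_apply, Fin.succAbove_zero]
      rw [hMTs r.succ c]
      rfl
    rw [hsub]
    simp
  rw [h1, ← h4, Matrix.det_mul, hdetT, mul_one]
end

section
/- Let $A$ be a graded $\mathbb{Q}$-algebra and $\theta_0, \theta_1, \theta_2, \theta_3 \in M_n(A)$ matrices of odd elements with graded trace $\mathrm{tr}$ (satisfying $\mathrm{tr}(MN) = -\mathrm{tr}(NM)$ for odd $M,N$). Define $G(\alpha, \beta, \gamma) = \tfrac{1}{2}\mathrm{tr}(\alpha\beta\gamma) - \tfrac{1}{2}\mathrm{tr}(\alpha\gamma\beta)$. Then the simplicial coboundary $G(\theta_1,\theta_2,\theta_3) - G(\theta_0,\theta_2,\theta_3) + G(\theta_0,\theta_1,\theta_3) - G(\theta_0,\theta_1,\theta_2)$ equals $-\tfrac{1}{2}\mathrm{tr}\big((\theta_0-\theta_1)(\theta_1-\theta_2)(\theta_2-\theta_3)\big)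 + \tfrac{1}{2}\mathrm{tr}\big((\theta_0-\theta_1)(\theta_2-\theta_3)(\theta_1-\theta_2)\big)$. -/
/-- Cyclicity (with plus sign) of the trace of a triple product of matrices
with pairwise anticommuting (odd) entries. -/
lemma odd_trace_cyc {A : Type*} [Ring A] {n : ℕ} (Odd' : Set A)
    (hanti : ∀ x ∈ Odd', ∀ y ∈ Odd', x * y = -(y * x))
    (a b c : Matrix (Fin n) (Fin n) A)
    (ha : ∀ i j, a i j ∈ Odd') (hb : ∀ i j, b i j ∈ Odd')
    (hc : ∀ i j, c i j ∈ Odd') :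
    Matrix.trace (a * b * c) = Matrix.trace (c * a * b) := by
  have key : ∀ x ∈ Odd', ∀ y ∈ Odd', ∀ z ∈ Odd', z * x * y = x * y * z := by
    intro x hx y hy z hz
    rw [mul_assoc x, hanti y hy z hz, mul_neg, ← mul_assoc, hanti x hx z hz,
      neg_mul, neg_neg, mul_assoc]
  have cyc3 : ∀ F : Fin n → Fin n → Fin n → A,
      (∑ x : Fin n, ∑ y : Fin n, ∑ z : Fin n, F y z x) =
        ∑ x : Fin n, ∑ y : Fin n, ∑ z : Fin n, F x y z := by
    intro F
    conv_lhs => rw [Finset.sum_comm]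
    exact Finset.sum_congr rfl fun y _ => Finset.sum_comm
  simp only [Matrix.trace, Matrix.diag, Matrix.mul_apply, Finset.sum_mul,
    Finset.mul_sum]
  have step : ∀ x y i : Fin n, c x i * a i y * b y x = a i y * b y x * c x i :=
    fun x y i => key _ (ha i y) _ (hb y x) _ (hc x i)
  simp only [step]
  exact cyc3 fun x y z => a z y * b y x * c x z

/-- The component `T C̄_{2,3}` (without the overall constant):
`G(a,b,c) = ½ tr(abc) - ½ tr(acb)`. -/
noncomputable def csG {A : Type*} [Ring A] [Algebra ℚ A] {n : ℕ}
    (a b c : Matrix (Fin n) (Fin n) A) : A :=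
  (1 / 2 : ℚ) • Matrix.trace (a * b * c) - (1 / 2 : ℚ) • Matrix.trace (a * c * b)

/-- the identity `d' T C̄_{2,3} = C̄_{3,3}`:
for matrices `θ₀, θ₁, θ₂, θ₃` of odd (anticommuting) elements of a graded ℚ-algebra,
`G(θ₁,θ₂,θ₃) - G(θ₀,θ₂,θ₃) + G(θ₀,θ₁,θ₃) - G(θ₀,θ₁,θ₂)
  = -½ tr((θ₀-θ₁)(θ₁-θ₂)(θ₂-θ₃)) + ½ tr((θ₀-θ₁)(θ₂-θ₃)(θ₁-θ₂))`. -/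
theorem cs_third_chern_bottom_identity {A : Type*} [Ring A] [Algebra ℚ A] {n : ℕ}
    (Odd' : Set A) (θ₀ θ₁ θ₂ θ₃ : Matrix (Fin n) (Fin n) A)
    (hO : ∀ i j, θ₀ i j ∈ Odd' ∧ θ₁ i j ∈ Odd' ∧ θ₂ i j ∈ Odd' ∧ θ₃ i j ∈ Odd')
    (hanti : ∀ x ∈ Odd', ∀ y ∈ Odd', x * y = -(y * x)) :
    csG θ₁ θ₂ θ₃ - csG θ₀ θ₂ θ₃ + csG θ₀ θ₁ θ₃ - csG θ₀ θ₁ θ₂ =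
      -((1 / 2 : ℚ) • Matrix.trace ((θ₀ - θ₁) * (θ₁ - θ₂) * (θ₂ - θ₃))) +
        (1 / 2 : ℚ) • Matrix.trace ((θ₀ - θ₁) * (θ₂ - θ₃) * (θ₁ - θ₂)) := by
  have h1' := fun i j => (hO i j).2.1
  have h2' := fun i j => (hO i j).2.2.1
  have h3' := fun i j => (hO i j).2.2.2
  have e1 : Matrix.trace (θ₁ * θ₂ * θ₁) = Matrix.trace (θ₁ * θ₁ * θ₂) :=
    odd_trace_cyc Odd' hanti θ₁ θ₂ θ₁ h1' h2' h1'
  have e2 : Matrix.trace (θ₁ * θ₃ * θ₁) = Matrix.trace (θ₁ * θ₁ * θ₃) :=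
    odd_trace_cyc Odd' hanti θ₁ θ₃ θ₁ h1' h3' h1'
  simp only [csG, sub_mul, mul_sub, Matrix.trace_sub, smul_sub]
  rw [e1, e2]
  module
end
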